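/- Let b₁,…,b_n be a normalized-at-infinity integral basis of O_K over ℂ[x] with exponents d₁,…,d_n (so x^{-d_i}b_i ∈ O_∞ with residues linearly independent modulo (1/x)O_∞). Then for any positive integer d, the set B_d = { x^j b_i : 0 ≤ j ≤ d − d_i, 1 ≤ i ≤ n } is a basis of the ℂ-vector space O_K ∩ x^d O_∞. -/

import Mathlib

/-!
Write `β ∈ O_K` as `∑ cᵢ bᵢ` with `cᵢ ∈ ℂ[x]` and suppose every weighted degree `deg cᵢ + dᵢ` is
at most `m`. Modulo `x⁻¹ O_∞`, the element `x^{-m} β` is congruent to `∑ aᵢ x^{-dᵢ} bᵢ`, where `aᵢ`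
is the coefficient of `x^{m - dᵢ}` in `cᵢ`. If `m > d` then `x^{-m} β ∈ x⁻¹ O_∞`, so normalization
forces all `aᵢ = 0`: every weighted degree is `< m`. Descending from any bound gives
`deg cᵢ ≤ d - dᵢ`, i.e. `β` lies in the span of `B_d`. Linear independence of `B_d` over `ℂ` comes
from that of the `bᵢ` over `ℂ[x]` and of the monomials over `ℂ`.
-/

noncomputable section
open scoped Classical
open Polynomial

variable (K : Type*) [Field K] [Algebra (RatFunc ℂ) K] [Algebra (Polynomial ℂ) K]
  [IsScalarTower (Polynomial ℂ) (RatFunc ℂ) K] [Algebra ℂ K]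
  [IsScalarTower ℂ (RatFunc ℂ) K] [FiniteDimensional (RatFunc ℂ) K]

/-- The ring `R_∞` of rational functions with no pole at `x = ∞`, i.e. the valuation
subring of the valuation at infinity on `ℂ(x)`. -/
def Rinf : Subring (RatFunc ℂ) := ((FunctionField.inftyValuation ℂ).valuationSubring).toSubring

instance : Algebra (Rinf) K :=
  ((algebraMap (RatFunc ℂ) K).comp (SubringClass.subtype Rinf)).toAlgebra

/-- `O_K`: the integral closure of `ℂ[x]` in `K`. -/
def OK : Subalgebra (Polynomial ℂ) K := integralClosure (Polynomial ℂ) K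

/-- `O_∞`: the integral closure of `R_∞` in `K`. -/
def Oinf : Subalgebra (Rinf) K := integralClosure (Rinf) K

/-- The element `x ∈ K`, the image of the variable of `ℂ(x)`. -/
def xK : K := algebraMap (RatFunc ℂ) K RatFunc.X

/-- `β ∈ x^e O_∞`. -/
def memXpowOinf (e : ℤ) (β : K) : Prop := ∃ γ ∈ Oinf K, β = xK K ^ e * γ

theorem linearIndependent_of_existsUnique_repr_zero {R A ι : Type*} [CommRing R] [Ring A]
    [Algebra R A] [Fintype ι] {b : ι → A}
    (h : ∃! c : ι → R, (0 : A) = ∑ i, algebraMap R A (c i) * b i) : LinearIndependent R b := by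
  rw [Fintype.linearIndependent_iff]
  intro g hg
  have hg0 : g = 0 := h.unique (by simp only [← Algebra.smul_def, hg]) (by simp)
  simp [hg0]

section

variable {K : Type*} [Field K] [Algebra (RatFunc ℂ) K]

theorem xK_ne_zero : xK K ≠ 0 :=
  (_root_.map_ne_zero _).mpr RatFunc.X_ne_zero

theorem algebraMap_mem_Oinf {f : RatFunc ℂ} (hf : RatFunc.inftyValuation ℂ f ≤ 1) :
    algebraMap (RatFunc ℂ) K f ∈ Oinf K :=
  (Oinf K).algebraMap_mem (⟨f, hf⟩ : Rinf)

theorem zpow_mem_Oinf_of_nonpos {e : ℤ} (he : e ≤ 0) : xK K ^ e ∈ Oinf K := by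
  rw [xK, ← map_zpow₀]
  apply algebraMap_mem_Oinf
  rwa [map_zpow₀, RatFunc.inftyValuation.X, ← WithZero.exp_zsmul, smul_eq_mul, mul_one,
    ← WithZero.exp_zero, WithZero.exp_le_exp]

section

variable [Algebra ℂ[X] K] [IsScalarTower ℂ[X] (RatFunc ℂ) K]

theorem xK_eq_algebraMap_X : xK K = algebraMap ℂ[X] K X := by
  rw [xK, IsScalarTower.algebraMap_apply ℂ[X] (RatFunc ℂ) K, RatFunc.algebraMap_X]

theorem xK_zpow_natCast (j : ℕ) : xK K ^ (j : ℤ) = algebraMap ℂ[X] K (X ^ j) := by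
  rw [zpow_natCast, map_pow, xK_eq_algebraMap_X]

end

variable [Algebra ℂ K] [IsScalarTower ℂ (RatFunc ℂ) K]

theorem algebraMap_complex_mem_Oinf (a : ℂ) : algebraMap ℂ K a ∈ Oinf K := by
  rw [IsScalarTower.algebraMap_apply ℂ (RatFunc ℂ) K]
  apply algebraMap_mem_Oinf
  rcases eq_or_ne a 0 with rfl | ha
  · simp
  · exact (RatFunc.inftyValuation.C ℂ ha).le

variable (K) in
def xpowOinf (e : ℤ) : Submodule ℂ K where
  carrier := {β | memXpowOinf K e β}
  zero_mem' := ⟨0, zero_mem _, (mul_zero _).symm⟩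
  add_mem' := by
    rintro _ _ ⟨γ₁, hγ₁, rfl⟩ ⟨γ₂, hγ₂, rfl⟩
    exact ⟨γ₁ + γ₂, add_mem hγ₁ hγ₂, (mul_add _ _ _).symm⟩
  smul_mem' := by
    rintro a _ ⟨γ, hγ, rfl⟩
    exact ⟨algebraMap ℂ K a * γ, mul_mem (algebraMap_complex_mem_Oinf a) hγ, by
      rw [Algebra.smul_def, mul_left_comm]⟩

theorem zpow_mem_xpowOinf (e : ℤ) : xK K ^ e ∈ xpowOinf K e :=
  ⟨1, one_mem _, (mul_one _).symm⟩

theorem mul_mem_xpowOinf {a b : ℤ} {β γ : K} (hβ : β ∈ xpowOinf K a) (hγ : γ ∈ xpowOinf K b) :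
    β * γ ∈ xpowOinf K (a + b) := by
  obtain ⟨β', hβ', rfl⟩ := hβ
  obtain ⟨γ', hγ', rfl⟩ := hγ
  exact ⟨β' * γ', mul_mem hβ' hγ', by rw [zpow_add₀ xK_ne_zero]; ring⟩

theorem xpowOinf_mono : Monotone (xpowOinf K) := by
  rintro e e' he _ ⟨γ, hγ, rfl⟩
  refine ⟨xK K ^ (e - e') * γ, mul_mem (zpow_mem_Oinf_of_nonpos (sub_nonpos.mpr he)) hγ, ?_⟩
  rw [← mul_assoc, ← zpow_add₀ xK_ne_zero, add_sub_cancel]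

variable [Algebra ℂ[X] K] [IsScalarTower ℂ[X] (RatFunc ℂ) K]

instance : IsScalarTower ℂ ℂ[X] K :=
  IsScalarTower.of_algebraMap_eq fun a => by
    rw [IsScalarTower.algebraMap_apply ℂ (RatFunc ℂ) K,
      IsScalarTower.algebraMap_apply ℂ[X] (RatFunc ℂ) K,
      ← IsScalarTower.algebraMap_apply ℂ ℂ[X] (RatFunc ℂ)]

theorem algebraMap_mul_eq_sum_support (P : ℂ[X]) (β : K) :
    algebraMap ℂ[X] K P * β = ∑ j ∈ P.support, P.coeff j • (xK K ^ (j : ℤ) * β) := by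
  conv_lhs => rw [P.as_sum_support_C_mul_X_pow]
  simp only [map_sum, Finset.sum_mul, map_mul, xK_zpow_natCast, Algebra.smul_def, mul_assoc,
    ← Polynomial.algebraMap_eq, ← IsScalarTower.algebraMap_apply]

theorem algebraMap_mem_xpowOinf {P : ℂ[X]} {e : ℤ} (hP : ∀ j ∈ P.support, (j : ℤ) ≤ e) :
    algebraMap ℂ[X] K P ∈ xpowOinf K e := by
  rw [← mul_one (algebraMap ℂ[X] K P), algebraMap_mul_eq_sum_support]
  refine Submodule.sum_mem _ fun j hj => Submodule.smul_mem _ _ ?_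
  rw [mul_one]
  exact xpowOinf_mono (hP j hj) (zpow_mem_xpowOinf _)

theorem linearIndependent_xK_zpow_mul {ι : Type*} {b : ι → K} (hb : LinearIndependent ℂ[X] b) :
    LinearIndependent ℂ fun p : ι × ℕ => xK K ^ (p.2 : ℤ) * b p.1 := by
  have h := (linearIndependent_smul (basisMonomials ℂ).linearIndependent hb).comp
    Prod.swap Prod.swap_injective
  convert h using 2 with p
  simp [coe_basisMonomials, monomial_one_right_eq_X_pow, Algebra.smul_def, xK_eq_algebraMap_X]

theorem zpow_neg_mul_sub_coeff_smul_mem {P : ℂ[X]} {β : K} {e m : ℤ} (hβ : β ∈ xpowOinf K e)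
    (hP : P ≠ 0 → (P.natDegree : ℤ) + e ≤ m) :
    xK K ^ (-m) * (algebraMap ℂ[X] K P * β) - P.coeff (m - e).toNat • (xK K ^ (-e) * β) ∈
      xpowOinf K (-1) := by
  rcases eq_or_ne P 0 with rfl | hP0
  · simp
  set k := (m - e).toNat
  have hk : (k : ℤ) = m - e := Int.toNat_of_nonneg (by have := hP hP0; omega)
  set Q := P - C (P.coeff k) * X ^ k
  have hQ : ∀ j ∈ Q.support, (j : ℤ) ≤ k - 1 := by
    intro j hj
    by_contra! hjk
    obtain rfl | hkj := eq_or_lt_of_le (show k ≤ j by omega)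
    · simp [Q] at hj
    · have hPj : P.coeff j = 0 := coeff_eq_zero_of_natDegree_lt (by have := hP hP0; omega)
      simp [Q, coeff_X_pow, hkj.ne', hPj] at hj
  have hxQβ := mul_mem_xpowOinf (zpow_mem_xpowOinf (-m))
    (mul_mem_xpowOinf (algebraMap_mem_xpowOinf hQ) hβ)
  have hexp : -m + (k - 1 + e) = -1 := by omega
  have hsplit : xK K ^ (-m) * (algebraMap ℂ[X] K P * β) - P.coeff k • (xK K ^ (-e) * β) =
      xK K ^ (-m) * (algebraMap ℂ[X] K Q * β) := by
    have hxk : xK K ^ (-m) * algebraMap ℂ[X] K (X ^ k) = xK K ^ (-e) := by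
      rw [← xK_zpow_natCast, ← zpow_add₀ xK_ne_zero, hk]
      ring_nf
    simp only [Q, map_sub, map_mul, Algebra.smul_def, ← Polynomial.algebraMap_eq,
      ← IsScalarTower.algebraMap_apply, ← hxk]
    ring
  rwa [hsplit, ← hexp]

variable {ι : Type*} {b : ι → K} {dd : ι → ℤ}

theorem span_le_OK_inf_xpowOinf (hbOK : ∀ i, b i ∈ OK K) (hb : ∀ i, b i ∈ xpowOinf K (dd i))
    (d : ℤ) :
    Submodule.span ℂ (Set.range
      fun p : {p : ι × ℕ // (p.2 : ℤ) ≤ d - dd p.1} => xK K ^ (p.1.2 : ℤ) * b p.1.1) ≤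
      Subalgebra.toSubmodule ((OK K).restrictScalars ℂ) ⊓ xpowOinf K d := by
  rw [Submodule.span_le]
  rintro _ ⟨⟨⟨i, j⟩, hij⟩, rfl⟩
  dsimp only at hij ⊢
  refine ⟨?_, ?_⟩
  · rw [SetLike.mem_coe, Subalgebra.mem_toSubmodule, Subalgebra.mem_restrictScalars,
      xK_zpow_natCast]
    exact mul_mem ((OK K).algebraMap_mem _) (hbOK i)
  · exact xpowOinf_mono (by omega)
      (mul_mem_xpowOinf (zpow_mem_xpowOinf (j : ℤ)) (hb i))

variable [Fintype ι]

theorem natDegree_add_lt_of_sum_mem_xpowOinf (hb : ∀ i, b i ∈ xpowOinf K (dd i))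
    (hindep : ∀ a : ι → ℂ, ∑ i, a i • (xK K ^ (-(dd i)) * b i) ∈ xpowOinf K (-1) → a = 0)
    {c : ι → ℂ[X]} {m : ℤ} (hm : ∀ i, c i ≠ 0 → ((c i).natDegree : ℤ) + dd i ≤ m)
    (hsum : ∑ i, algebraMap ℂ[X] K (c i) * b i ∈ xpowOinf K (m - 1)) :
    ∀ i, c i ≠ 0 → ((c i).natDegree : ℤ) + dd i < m := by
  set lead : ι → ℂ := fun i => (c i).coeff (m - dd i).toNat
  have hlead : lead = 0 := by
    apply hindep
    have hscaled := mul_mem_xpowOinf (zpow_mem_xpowOinf (-m)) hsum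
    rw [show -m + (m - 1) = -1 by ring] at hscaled
    have herr := Submodule.sum_mem (xpowOinf K (-1)) fun i (_ : i ∈ Finset.univ) =>
      zpow_neg_mul_sub_coeff_smul_mem (hb i) (hm i)
    rw [Finset.sum_sub_distrib, ← Finset.mul_sum] at herr
    simpa using Submodule.sub_mem _ hscaled herr
  intro i hi
  by_contra! hge
  have hdeg : (m - dd i).toNat = (c i).natDegree := by have := hm i hi; omega
  exact leadingCoeff_ne_zero.mpr hi (by simpa [lead, hdeg] using congrFun hlead i)

theorem natDegree_add_le_of_sum_mem_xpowOinf (hb : ∀ i, b i ∈ xpowOinf K (dd i))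
    (hindep : ∀ a : ι → ℂ, ∑ i, a i • (xK K ^ (-(dd i)) * b i) ∈ xpowOinf K (-1) → a = 0)
    {c : ι → ℂ[X]} {d : ℤ} (hsum : ∑ i, algebraMap ℂ[X] K (c i) * b i ∈ xpowOinf K d) :
    ∀ i, c i ≠ 0 → ((c i).natDegree : ℤ) + dd i ≤ d := by
  have descend : ∀ k : ℕ, (∀ i, c i ≠ 0 → ((c i).natDegree : ℤ) + dd i ≤ d + k) →
      ∀ i, c i ≠ 0 → ((c i).natDegree : ℤ) + dd i ≤ d := by
    intro k
    induction k with
    | zero => simp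
    | succ k ih =>
      intro hk
      refine ih fun i hi => Int.lt_add_one_iff.mp ?_
      refine natDegree_add_lt_of_sum_mem_xpowOinf hb hindep
        (fun i hi => by have := hk i hi; omega) ?_ i hi
      exact xpowOinf_mono (by omega) hsum
  obtain ⟨M, hM⟩ := Finite.exists_le fun i => ((c i).natDegree : ℤ) + dd i
  exact descend (M - d).toNat fun i _ => (hM i).trans (by omega)

theorem sum_mem_span_of_natDegree_add_le {d : ℤ} {c : ι → ℂ[X]}
    (hc : ∀ i, c i ≠ 0 → ((c i).natDegree : ℤ) + dd i ≤ d) :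
    ∑ i, algebraMap ℂ[X] K (c i) * b i ∈ Submodule.span ℂ (Set.range
      fun p : {p : ι × ℕ // (p.2 : ℤ) ≤ d - dd p.1} => xK K ^ (p.1.2 : ℤ) * b p.1.1) := by
  refine Submodule.sum_mem _ fun i _ => ?_
  rw [algebraMap_mul_eq_sum_support]
  refine Submodule.sum_mem _ fun j hj => Submodule.smul_mem _ _ (Submodule.subset_span ?_)
  have hle : (j : ℤ) ≤ d - dd i := by
    have := le_natDegree_of_mem_supp j hj
    have := hc i (nonempty_support_iff.mp ⟨j, hj⟩)
    omega
  exact ⟨⟨(i, j), hle⟩, rfl⟩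

end

theorem normalized_basis_riemann_roch
    (n : ℕ) (b : Fin n → K) (hbOK : ∀ i, b i ∈ OK K)
    (hbasis : ∀ β ∈ OK K, ∃! c : Fin n → Polynomial ℂ,
      β = ∑ i, algebraMap (Polynomial ℂ) K (c i) * b i)
    (dd : Fin n → ℤ)
    (hmemd : ∀ i, memXpowOinf K (dd i) (b i))
    (hindep : ∀ c : Fin n → ℂ,
      (∃ γ ∈ Oinf K, (∑ i, c i • (xK K ^ (-(dd i)) * b i)) = (xK K)⁻¹ * γ) → c = 0)
    (d : ℕ) :
    LinearIndependent ℂ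
      (fun p : {p : Fin n × ℕ // (p.2 : ℤ) ≤ (d : ℤ) - dd p.1} =>
        xK K ^ (p.1.2 : ℤ) * b p.1.1) ∧
    ∀ β : K, (β ∈ OK K ∧ memXpowOinf K (d : ℤ) β) ↔
      β ∈ Submodule.span ℂ
        (Set.range (fun p : {p : Fin n × ℕ // (p.2 : ℤ) ≤ (d : ℤ) - dd p.1} =>
          xK K ^ (p.1.2 : ℤ) * b p.1.1)) := by
  have hb : ∀ i, b i ∈ xpowOinf K (dd i) := hmemd
  have hindep' : ∀ a : Fin n → ℂ,
      ∑ i, a i • (xK K ^ (-(dd i)) * b i) ∈ xpowOinf K (-1) → a = 0 :=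
    fun a ⟨γ, hγ, h⟩ => hindep a ⟨γ, hγ, by rwa [zpow_neg_one] at h⟩
  have hlin := linearIndependent_of_existsUnique_repr_zero (hbasis 0 (zero_mem _))
  refine ⟨(linearIndependent_xK_zpow_mul hlin).comp _ Subtype.val_injective,
    fun β => ⟨?_, fun hβ => span_le_OK_inf_xpowOinf hbOK hb d hβ⟩⟩
  rintro ⟨hβOK, hβd⟩
  obtain ⟨c, rfl, -⟩ := hbasis β hβOK
  exact sum_mem_span_of_natDegree_add_le (natDegree_add_le_of_sum_mem_xpowOinf hb hindep' hβd)
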